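/- Let 𝔪̃ be an eigenvalue multiplicity vector for n. Then the closure of F(𝔪̃) in Sym₀(n) minus F(𝔪̃) itself equals the union of the faces F(𝔪) over all eigenvalue multiplicity vectors 𝔪 with 𝔪 < 𝔪̃; that is, cl(F(𝔪̃)) ∖ F(𝔪̃) = ⋃_{𝔪 < 𝔪̃} F(𝔪). -/

import Mathlib

open Matrix

/-- `S` has multiplicity type given by the monotone surjective map `π : Fin n → Fin L`:
`S` is orthogonally diagonalizable with nondecreasing eigenvalues `λ₁ ≤ ⋯ ≤ λ_n` such that
`λ_a = λ_b` iff `π a = π b`. -/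
def MultType {n L : ℕ} (π : Fin n → Fin L) (S : Matrix (Fin n) (Fin n) ℝ) : Prop :=
  ∃ lam : Fin n → ℝ, Monotone lam ∧ (∀ a b, lam a = lam b ↔ π a = π b) ∧
    ∃ P : Matrix (Fin n) (Fin n) ℝ, Pᵀ * P = 1 ∧ S = P * Matrix.diagonal lam * Pᵀ

/-- The face `F(𝔪) ⊆ Sym₀(n)`: traceless matrices of multiplicity type `𝔪`. -/
def Face {n L : ℕ} (π : Fin n → Fin L) : Set (Matrix (Fin n) (Fin n) ℝ) :=
  {S | S.trace = 0 ∧ MultType π S}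

/-- The multiplicity `m_i`, i.e. the cardinality of the fiber `π⁻¹(i)`. -/
def multCard {n L : ℕ} (π : Fin n → Fin L) (i : Fin L) : ℕ :=
  (Finset.univ.filter fun a => π a = i).card

/-- `𝔪 ≤ 𝔪̃` : there is a surjective nondecreasing `J` with `m_i = Σ_{j ∈ J⁻¹(i)} m̃_j`.
Here `π` encodes `𝔪` and `π'` encodes `𝔪̃`. -/
def MultLE {n L L' : ℕ} (π : Fin n → Fin L) (π' : Fin n → Fin L') : Prop :=
  ∃ J : Fin L' → Fin L, Monotone J ∧ Function.Surjective J ∧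
    ∀ i : Fin L, multCard π i = ∑ j ∈ Finset.univ.filter (fun j => J j = i), multCard π' j


open Finset in
lemma multCard_comp {n L L' : ℕ} (J : Fin L' → Fin L) (π' : Fin n → Fin L') (i : Fin L) :
    multCard (fun a => J (π' a)) i = ∑ j ∈ univ.filter (fun j => J j = i), multCard π' j := by
  unfold multCard
  rw [Finset.card_eq_sum_card_fiberwise (f := π') (t := univ.filter (fun j => J j = i))
    (fun a ha => by simpa using (mem_filter.mp ha).2)]
  refine Finset.sum_congr rfl fun j hj => ?_
  congr 1
  ext a
  simp only [mem_filter, mem_univ, true_and] at *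
  constructor
  · rintro ⟨-, h⟩; exact h
  · intro h; exact ⟨by rw [h]; exact hj, h⟩

open Finset in
lemma monotone_lt_iff {n L : ℕ} {f : Fin n → Fin L} (hf : Monotone f) (a : Fin n) (i : Fin L) :
    f a < i ↔ (a : ℕ) < (univ.filter fun b => f b < i).card := by
  constructor
  · intro h
    have hsub : Finset.Iic a ⊆ univ.filter fun b => f b < i := by
      intro b hb
      simp only [mem_filter, mem_univ, true_and]
      exact lt_of_le_of_lt (hf (Finset.mem_Iic.mp hb)) h
    have := Finset.card_le_card hsub
    rw [Fin.card_Iic] at this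
    omega
  · intro h
    by_contra hc
    push_neg at hc
    have hsub : (univ.filter fun b => f b < i) ⊆ Finset.Iio a := by
      intro b hb
      simp only [mem_filter, mem_univ, true_and] at hb
      rw [Finset.mem_Iio]
      by_contra hba
      push_neg at hba
      exact absurd (lt_of_lt_of_le hb hc) (not_lt.mpr (hf hba))
    have := Finset.card_le_card hsub
    rw [Fin.card_Iio] at this
    omega

open Finset in
lemma card_filter_lt {n L : ℕ} (f : Fin n → Fin L) (i : Fin L) :
    (univ.filter fun b => f b < i).card = ∑ j ∈ univ.filter (· < i), multCard f j := by
  unfold multCard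
  rw [Finset.card_eq_sum_card_fiberwise (f := f) (t := univ.filter (· < i))
    (fun a ha => by simpa using (mem_filter.mp ha).2)]
  refine Finset.sum_congr rfl fun j hj => ?_
  congr 1
  ext a
  simp only [mem_filter, mem_univ, true_and] at *
  constructor
  · rintro ⟨-, h⟩; exact h
  · intro h; exact ⟨by rw [h]; exact hj, h⟩

open Finset in
lemma monotone_eq_of_multCard {n L : ℕ} {f g : Fin n → Fin L} (hf : Monotone f) (hg : Monotone g)
    (h : ∀ i, multCard f i = multCard g i) : f = g := by
  have key : ∀ a i, f a < i ↔ g a < i := by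
    intro a i
    rw [monotone_lt_iff hf, monotone_lt_iff hg, card_filter_lt, card_filter_lt]
    rw [Finset.sum_congr rfl fun j _ => h j]
  funext a
  rcases lt_trichotomy (f a) (g a) with hlt | heq | hgt
  · exact absurd ((key a (g a)).mp hlt).false (by simp)
  · exact heq
  · exact absurd ((key a (f a)).mpr hgt).false (by simp)


open Polynomial in
lemma det_smul_one_sub {n : ℕ} {P : Matrix (Fin n) (Fin n) ℝ} {lam : Fin n → ℝ}
    (hP : Pᵀ * P = 1) (x : ℝ) :
    (x • (1 : Matrix (Fin n) (Fin n) ℝ) - P * diagonal lam * Pᵀ).det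
      = ∏ i, (x - lam i) := by
  have hP' : P * Pᵀ = 1 := mul_eq_one_comm.mp hP
  have hd : diagonal (fun i => x - lam i)
      = x • (1 : Matrix (Fin n) (Fin n) ℝ) - diagonal lam := by
    rw [smul_one_eq_diagonal, ← diagonal_sub]
  have h1 : x • (1 : Matrix (Fin n) (Fin n) ℝ) - P * diagonal lam * Pᵀ
      = P * diagonal (fun i => x - lam i) * Pᵀ := by
    rw [hd]
    simp [Matrix.mul_sub, Matrix.sub_mul, Matrix.mul_smul, Matrix.smul_mul, hP']
  have hdet : P.det * P.det = 1 := by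
    have := congrArg Matrix.det hP
    rwa [det_mul, det_transpose, det_one] at this
  rw [h1, det_mul, det_mul, det_transpose, det_diagonal, mul_right_comm, hdet, one_mul]

open Polynomial in
lemma monotone_eq_of_prod_eq {n : ℕ} {lam mu : Fin n → ℝ} (hlam : Monotone lam)
    (hmu : Monotone mu) (h : ∀ x : ℝ, ∏ i, (x - lam i) = ∏ i, (x - mu i)) : lam = mu := by
  have hp : (∏ i, (X - C (lam i))) = ∏ i, (X - C (mu i)) := by
    apply Polynomial.funext
    intro x
    simp only [eval_prod, eval_sub, eval_X, eval_C]
    exact h x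
  have hroots : Multiset.map lam Finset.univ.val = Multiset.map mu Finset.univ.val := by
    have r1 := Polynomial.roots_multiset_prod_X_sub_C (Multiset.map lam Finset.univ.val)
    have r2 := Polynomial.roots_multiset_prod_X_sub_C (Multiset.map mu Finset.univ.val)
    rw [Multiset.map_map] at r1 r2
    rw [← r1, ← r2, ← Finset.prod_eq_multiset_prod, ← Finset.prod_eq_multiset_prod]
    simp only [Function.comp]
    rw [hp]
  rw [Fin.univ_val_map, Fin.univ_val_map, Multiset.coe_eq_coe] at hroots
  rw [← List.ofFn_inj]
  exact hroots.eq_of_sortedLE hlam.sortedLE_ofFn hmu.sortedLE_ofFn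

lemma eig_unique {n : ℕ} {P Q : Matrix (Fin n) (Fin n) ℝ} {lam mu : Fin n → ℝ}
    (hP : Pᵀ * P = 1) (hQ : Qᵀ * Q = 1) (hlam : Monotone lam) (hmu : Monotone mu)
    (h : P * diagonal lam * Pᵀ = Q * diagonal mu * Qᵀ) : lam = mu := by
  refine monotone_eq_of_prod_eq hlam hmu fun x => ?_
  rw [← det_smul_one_sub hP x, ← det_smul_one_sub hQ x, h]

lemma lists_eq_of_same_fibers {n L Lt : ℕ} {π : Fin n → Fin L} {πt : Fin n → Fin Lt}
    (hπm : Monotone π) (hπs : Function.Surjective π)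
    (hπtm : Monotone πt) (hπts : Function.Surjective πt)
    (hiff : ∀ a b, π a = π b ↔ πt a = πt b) :
    List.ofFn (multCard π) = List.ofFn (multCard πt) := by
  classical
  set K : Fin L → Fin Lt := fun i => πt (hπs i).choose with hKdef
  have hK : ∀ a, πt a = K (π a) := by
    intro a
    have hspec : π (hπs (π a)).choose = π a := (hπs (π a)).choose_spec
    exact (hiff a _).mp hspec.symm
  have hKinj : Function.Injective K := by
    intro i i' h
    have h2 : π (hπs i).choose = π (hπs i').choose := (hiff _ _).mpr h
    rw [(hπs i).choose_spec, (hπs i').choose_spec] at h2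
    exact h2
  have hKmono : Monotone K := by
    intro i i' hle
    rcases le_or_gt (hπs i).choose (hπs i').choose with hc | hc
    · exact hπtm hc
    · have : i' ≤ i := by
        rw [← (hπs i).choose_spec, ← (hπs i').choose_spec]
        exact hπm hc.le
      rw [le_antisymm hle this]
  have hKsurj : Function.Surjective K := by
    intro j
    obtain ⟨a, ha⟩ := hπts j
    exact ⟨π a, by rw [← hK a, ha]⟩
  have hKsm : StrictMono K := hKmono.strictMono_of_injective hKinj
  have hKval : ∀ i, (K i : ℕ) = (i : ℕ) := by
    intro i
    have := Fin.coe_orderIso_apply (hKsm.orderIsoOfSurjective K hKsurj) i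
    rwa [StrictMono.coe_orderIsoOfSurjective] at this
  have hLL : L = Lt := by
    have := Fintype.card_fin L ▸ Fintype.card_fin Lt ▸
      Fintype.card_congr (hKsm.orderIsoOfSurjective K hKsurj).toEquiv
    simpa using this
  have hfib : ∀ i, multCard π i = multCard πt (K i) := by
    intro i
    unfold multCard
    congr 1
    ext a
    simp only [Finset.mem_filter, Finset.mem_univ, true_and]
    constructor
    · intro h; rw [hK a, h]
    · intro h; exact hKinj (by rw [← hK a, h])
  apply List.ext_getElem (by simp [hLL])
  intro i h1 h2
  simp only [List.getElem_ofFn]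
  rw [hfib]
  congr 1
  apply Fin.ext
  rw [hKval]

-- trace computation helper
lemma trace_conj {n : ℕ} {P : Matrix (Fin n) (Fin n) ℝ} (hP : Pᵀ * P = 1) (d : Fin n → ℝ) :
    (P * diagonal d * Pᵀ).trace = ∑ i, d i := by
  rw [Matrix.trace_mul_comm (P * diagonal d) Pᵀ, ← Matrix.mul_assoc, hP, Matrix.one_mul,
    Matrix.trace_diagonal]

-- closure membership by perturbation
lemma mem_closure_face {n Lt : ℕ} (hn : 0 < n) (πt : Fin n → Fin Lt) (hπtmono : Monotone πt)
    {S : Matrix (Fin n) (Fin n) ℝ} {lam : Fin n → ℝ} {P : Matrix (Fin n) (Fin n) ℝ}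
    (hlamm : Monotone lam)
    (hfib : ∀ a b, πt a = πt b → lam a = lam b)
    (hsum : ∑ a, lam a = 0)
    (hP : Pᵀ * P = 1) (hS : S = P * diagonal lam * Pᵀ) :
    S ∈ closure (Face πt) := by
  classical
  set κ : ℝ := (∑ a : Fin n, ((πt a : ℕ) : ℝ)) / n with hκ
  set c : Fin Lt → ℝ := fun j => ((j : ℕ) : ℝ) - κ with hc
  have hcmono : Monotone c := by
    intro j j' h
    simp only [hc]
    have : ((j : ℕ) : ℝ) ≤ ((j' : ℕ) : ℝ) := by exact_mod_cast h
    linarith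
  have hcinj : Function.Injective c := by
    intro j j' h
    simp only [hc, sub_left_inj] at h
    exact Fin.ext (by exact_mod_cast h)
  set lamf : ℝ → Fin n → ℝ := fun ε a => lam a + ε * c (πt a) with hlamf
  set Sf : ℝ → Matrix (Fin n) (Fin n) ℝ := fun ε => P * diagonal (lamf ε) * Pᵀ with hSf
  have hcont : Continuous Sf := by
    apply Continuous.matrix_mul
    apply Continuous.matrix_mul continuous_const
    apply Continuous.matrix_diagonal
    exact continuous_pi fun a => continuous_const.add (continuous_id.mul continuous_const)
    exact continuous_const
  have htend : Filter.Tendsto Sf (nhdsWithin 0 (Set.Ioi 0)) (nhds S) := by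
    have h0 : Sf 0 = S := by
      simp only [hSf, hlamf, hS]
      congr 2
      funext a
      simp
    have := (hcont.tendsto 0).mono_left (nhdsWithin_le_nhds (s := Set.Ioi (0:ℝ)))
    rwa [h0] at this
  refine mem_closure_of_tendsto htend ?_
  have hpair : ∀ a b : Fin n, ∀ᶠ ε in nhdsWithin 0 (Set.Ioi 0),
      πt a ≠ πt b → lamf ε a ≠ lamf ε b := by
    intro a b
    by_cases hab : πt a = πt b
    · exact Filter.Eventually.of_forall fun ε h => absurd hab h
    · by_cases hl : lam a = lam b
      · refine eventually_mem_nhdsWithin.mono fun ε hε _ heq => hab ?_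
        have hε' : (0:ℝ) < ε := hε
        simp only [hlamf, hl] at heq
        have : ε * c (πt a) = ε * c (πt b) := by linarith
        exact hcinj (mul_left_cancel₀ hε'.ne' this)
      · have htd : Filter.Tendsto (fun ε : ℝ => lamf ε a - lamf ε b)
            (nhdsWithin 0 (Set.Ioi 0)) (nhds (lam a - lam b)) := by
          have hcont2 : Continuous fun ε : ℝ => lamf ε a - lamf ε b := by
            simp only [hlamf]
            fun_prop
          have := (hcont2.tendsto 0).mono_left (nhdsWithin_le_nhds (s := Set.Ioi (0:ℝ)))
          simpa [hlamf] using this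
        refine (htd.eventually_ne (sub_ne_zero.mpr hl)).mono fun ε h _ heq => ?_
        exact h (by rw [heq]; ring)
  have hpos : ∀ᶠ ε in nhdsWithin 0 (Set.Ioi 0), (0:ℝ) < ε := eventually_mem_nhdsWithin
  filter_upwards [hpos, Filter.eventually_all.mpr fun a => Filter.eventually_all.mpr (hpair a)]
    with ε hε hp
  refine ⟨?_, lamf ε, ?_, ?_, P, hP, rfl⟩
  · -- trace
    rw [trace_conj hP]
    have h1 : ∑ a, lamf ε a = ∑ a, lam a + ε * ∑ a, c (πt a) := by
      simp only [hlamf]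
      rw [Finset.sum_add_distrib, Finset.mul_sum]
    have h2 : ∑ a : Fin n, c (πt a) = 0 := by
      simp only [hc]
      rw [Finset.sum_sub_distrib, Finset.sum_const, Finset.card_univ, Fintype.card_fin, hκ]
      rw [nsmul_eq_mul]
      field_simp
      ring
    rw [h1, hsum, h2]
    ring
  · -- monotone
    intro a b hab
    have h1 : lam a ≤ lam b := hlamm hab
    have h2 : c (πt a) ≤ c (πt b) := hcmono (hπtmono hab)
    simp only [hlamf]
    nlinarith
  · -- iff
    intro a b
    constructor
    · intro h
      by_contra hne
      exact hp a b hne h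
    · intro h
      simp only [hlamf, hfib a b h, h]

/-- Any limit of a sequence in `Face πt` is of the form `P (diag lam) Pᵀ` with `lam` monotone,
constant on `πt`-fibers, summing to `0`. -/
lemma limit_structure {n Lt : ℕ} (πt : Fin n → Fin Lt)
    {S : Matrix (Fin n) (Fin n) ℝ} (hcl : S ∈ closure (Face πt)) :
    ∃ (lam : Fin n → ℝ) (P : Matrix (Fin n) (Fin n) ℝ),
      Monotone lam ∧ (∀ a b, πt a = πt b → lam a = lam b) ∧ (∑ a, lam a = 0) ∧
      Pᵀ * P = 1 ∧ S = P * diagonal lam * Pᵀ := by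
  classical
  haveI : FirstCountableTopology (Matrix (Fin n) (Fin n) ℝ) :=
    inferInstanceAs (FirstCountableTopology (Fin n → Fin n → ℝ))
  obtain ⟨u, hu_mem, hu_lim⟩ := mem_closure_iff_seq_limit.mp hcl
  choose lamseq hlam_mono hlam_iff Pseq hPseq hSeq using fun k => (hu_mem k).2
  have htr := fun k => (hu_mem k).1
  -- entrywise bound on Pseq
  have hPbound : ∀ k a i, Pseq k a i ∈ Set.Icc (-1 : ℝ) 1 := by
    intro k a i
    have h1 := congrFun (congrFun (hPseq k) i) i
    rw [Matrix.mul_apply] at h1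
    simp only [Matrix.transpose_apply, Matrix.one_apply_eq] at h1
    have hsq : Pseq k a i * Pseq k a i ≤ 1 := by
      rw [← h1]
      exact Finset.single_le_sum (fun x _ => mul_self_nonneg (Pseq k x i)) (Finset.mem_univ a)
    constructor <;> nlinarith
  -- the diagonal is conjugate of u k
  have hlamval : ∀ k, diagonal (lamseq k) = (Pseq k)ᵀ * u k * Pseq k := by
    intro k
    rw [hSeq k]
    simp only [Matrix.mul_assoc]
    rw [hPseq k, Matrix.mul_one, ← Matrix.mul_assoc, hPseq k, Matrix.one_mul]
  -- bound on eigenvalues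
  set g : ℕ → ℝ := fun k => ∑ b, ∑ a, |u k a b| with hg
  have hgtend : Filter.Tendsto g Filter.atTop (nhds (∑ b, ∑ a, |S a b|)) := by
    have hcontg : Continuous fun M : Matrix (Fin n) (Fin n) ℝ => ∑ b, ∑ a, |M a b| := by
      refine continuous_finset_sum _ fun b _ => continuous_finset_sum _ fun a _ => ?_
      exact (continuous_id.matrix_elem a b).abs
    exact (hcontg.tendsto S).comp hu_lim
  obtain ⟨B, hB⟩ := hgtend.bddAbove_range
  have hgB : ∀ k, g k ≤ B := fun k => hB (Set.mem_range_self k)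
  have hlambound : ∀ k i, lamseq k i ∈ Set.Icc (-B) B := by
    intro k i
    have h0 : lamseq k i = ∑ b, (∑ a, Pseq k a i * u k a b) * Pseq k b i := by
      have h := congrFun (congrFun (hlamval k) i) i
      rw [Matrix.diagonal_apply_eq] at h
      rw [h, Matrix.mul_apply]
      refine Finset.sum_congr rfl fun b _ => ?_
      rw [Matrix.mul_apply]
      simp only [Matrix.transpose_apply]
    have habs : |lamseq k i| ≤ g k := by
      rw [h0, hg]
      refine (Finset.abs_sum_le_sum_abs _ _).trans (Finset.sum_le_sum fun b _ => ?_)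
      rw [abs_mul]
      have h1 : |∑ a, Pseq k a i * u k a b| ≤ ∑ a, |u k a b| := by
        refine (Finset.abs_sum_le_sum_abs _ _).trans (Finset.sum_le_sum fun a _ => ?_)
        rw [abs_mul]
        have h2 := abs_le.mpr (hPbound k a i)
        nlinarith [abs_nonneg (u k a b), abs_nonneg (Pseq k a i)]
      have h2 : |Pseq k b i| ≤ 1 := abs_le.mpr (hPbound k b i)
      calc |∑ a, Pseq k a i * u k a b| * |Pseq k b i|
          ≤ (∑ a, |u k a b|) * 1 := by
            refine mul_le_mul h1 h2 (abs_nonneg _) ?_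
            exact Finset.sum_nonneg fun a _ => abs_nonneg _
        _ = ∑ a, |u k a b| := mul_one _
    have := habs.trans (hgB k)
    rw [abs_le] at this
    exact ⟨this.1, this.2⟩
  -- compactness
  set Kset : Set (Matrix (Fin n) (Fin n) ℝ × (Fin n → ℝ)) :=
    {P : Matrix (Fin n) (Fin n) ℝ | ∀ a i, P a i ∈ Set.Icc (-1 : ℝ) 1} ×ˢ
      {l : Fin n → ℝ | ∀ i, l i ∈ Set.Icc (-B) B} with hKset
  have hK1 : IsCompact {P : Matrix (Fin n) (Fin n) ℝ | ∀ a i, P a i ∈ Set.Icc (-1 : ℝ) 1} := by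
    have heq : {P : Matrix (Fin n) (Fin n) ℝ | ∀ a i, P a i ∈ Set.Icc (-1 : ℝ) 1}
        = Set.pi Set.univ (fun _ : Fin n => Set.pi Set.univ
            fun _ : Fin n => Set.Icc (-1 : ℝ) 1) := by
      ext P
      simp only [Set.mem_setOf_eq]
      exact ⟨fun h a _ i _ => h a i, fun h a i => h a (Set.mem_univ a) i (Set.mem_univ i)⟩
    rw [heq]
    exact isCompact_univ_pi fun _ => isCompact_univ_pi fun _ => isCompact_Icc
  have hK2 : IsCompact {l : Fin n → ℝ | ∀ i, l i ∈ Set.Icc (-B) B} := by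
    have heq : {l : Fin n → ℝ | ∀ i, l i ∈ Set.Icc (-B) B}
        = Set.pi Set.univ (fun _ : Fin n => Set.Icc (-B) B) := by
      ext l
      simp only [Set.mem_setOf_eq]
      exact ⟨fun h i _ => h i, fun h i => h i (Set.mem_univ i)⟩
    rw [heq]
    exact isCompact_univ_pi fun _ => isCompact_Icc
  have hxmem : ∀ k, (Pseq k, lamseq k) ∈ Kset := fun k =>
    ⟨fun a i => hPbound k a i, fun i => hlambound k i⟩
  obtain ⟨⟨P, lam⟩, -, φ, hφ, hconv⟩ := (hK1.prod hK2).tendsto_subseq hxmem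
  have hconv1 : Filter.Tendsto (fun k => Pseq (φ k)) Filter.atTop (nhds P) :=
    (continuous_fst.tendsto (P, lam)).comp hconv
  have hconv2 : Filter.Tendsto (fun k => lamseq (φ k)) Filter.atTop (nhds lam) :=
    (continuous_snd.tendsto (P, lam)).comp hconv
  have hPorth : Pᵀ * P = 1 := by
    have h1 : Filter.Tendsto (fun k => (Pseq (φ k))ᵀ * Pseq (φ k)) Filter.atTop
        (nhds (Pᵀ * P)) :=
      ((continuous_id.matrix_transpose.matrix_mul continuous_id).tendsto P).comp hconv1
    have h2 : Filter.Tendsto (fun k => (Pseq (φ k))ᵀ * Pseq (φ k)) Filter.atTop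
        (nhds (1 : Matrix (Fin n) (Fin n) ℝ)) := by
      simp only [hPseq]
      exact tendsto_const_nhds
    exact tendsto_nhds_unique h1 h2
  have hlamm : Monotone lam := by
    intro a b hab
    refine le_of_tendsto_of_tendsto' (((continuous_apply a).tendsto lam).comp hconv2)
      (((continuous_apply b).tendsto lam).comp hconv2) fun k => ?_
    exact hlam_mono (φ k) hab
  have hfib : ∀ a b, πt a = πt b → lam a = lam b := by
    intro a b h
    have t1 : Filter.Tendsto (fun k => lamseq (φ k) a) Filter.atTop (nhds (lam a)) :=
      ((continuous_apply a).tendsto lam).comp hconv2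
    have t2 : Filter.Tendsto (fun k => lamseq (φ k) b) Filter.atTop (nhds (lam b)) :=
      ((continuous_apply b).tendsto lam).comp hconv2
    have heqf : (fun k => lamseq (φ k) a) = fun k => lamseq (φ k) b :=
      funext fun k => (hlam_iff (φ k) a b).mpr h
    rw [heqf] at t1
    exact tendsto_nhds_unique t1 t2
  have hS : S = P * diagonal lam * Pᵀ := by
    have h1 : Filter.Tendsto (fun k => u (φ k)) Filter.atTop (nhds S) :=
      hu_lim.comp hφ.tendsto_atTop
    have hd : Filter.Tendsto (fun k => diagonal (lamseq (φ k))) Filter.atTop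
        (nhds (diagonal lam)) := ((continuous_id.matrix_diagonal).tendsto lam).comp hconv2
    have hT : Filter.Tendsto (fun k => (Pseq (φ k))ᵀ) Filter.atTop (nhds Pᵀ) :=
      ((continuous_id.matrix_transpose).tendsto P).comp hconv1
    have h2 : Filter.Tendsto (fun k => Pseq (φ k) * diagonal (lamseq (φ k)) * (Pseq (φ k))ᵀ)
        Filter.atTop (nhds (P * diagonal lam * Pᵀ)) := (hconv1.mul hd).mul hT
    refine tendsto_nhds_unique h1 ?_
    simp only [hSeq]
    exact h2
  have hsum : ∑ a, lam a = 0 := by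
    have h1 : Filter.Tendsto (fun k => ∑ a, lamseq (φ k) a) Filter.atTop (nhds (∑ a, lam a)) :=
      ((continuous_finset_sum _ fun a _ => continuous_apply a).tendsto lam).comp hconv2
    have h2 : ∀ k, ∑ a, lamseq (φ k) a = 0 := by
      intro k
      have := htr (φ k)
      rw [hSeq (φ k), Matrix.trace_mul_comm (Pseq (φ k) * diagonal (lamseq (φ k))) (Pseq (φ k))ᵀ,
        ← Matrix.mul_assoc, hPseq (φ k), Matrix.one_mul, Matrix.trace_diagonal] at this
      exact this
    have hconst : (fun k => ∑ a, lamseq (φ k) a) = fun _ => (0:ℝ) := funext fun k => h2 k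
    have h3 : Filter.Tendsto (fun k => ∑ a, lamseq (φ k) a) Filter.atTop (nhds 0) := by
      rw [hconst]; exact tendsto_const_nhds
    exact tendsto_nhds_unique h1 h3
  exact ⟨lam, P, hlamm, hfib, hsum, hPorth, hS⟩

/-- `cl(F(𝔪̃)) ∖ F(𝔪̃) = ⋃_{𝔪 < 𝔪̃} F(𝔪)`. The strict inequality `𝔪 < 𝔪̃`
is `𝔪 ≤ 𝔪̃` together with inequality of the multiplicity tuples. -/
theorem closure_face_sdiff (n Lt : ℕ)
    (πt : Fin n → Fin Lt) (hπtmono : Monotone πt) (hπtsurj : Function.Surjective πt) :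
    closure (Face πt) \ Face πt =
      {S | ∃ (L : ℕ) (π : Fin n → Fin L), Monotone π ∧ Function.Surjective π ∧
        MultLE π πt ∧ List.ofFn (multCard π) ≠ List.ofFn (multCard πt) ∧ S ∈ Face π} := by
  classical
  ext S
  simp only [Set.mem_diff, Set.mem_setOf_eq]
  constructor
  · rintro ⟨hcl, hnF⟩
    obtain ⟨lam, P, hlamm, hfibt, hsum, hP, hS⟩ := limit_structure πt hcl
    have htrS : S.trace = 0 := by rw [hS, trace_conj hP, hsum]
    set v : Fin Lt → ℝ := fun j => lam (hπtsurj j).choose with hv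
    have hva : ∀ a, lam a = v (πt a) := fun a =>
      hfibt a _ ((hπtsurj (πt a)).choose_spec).symm
    have hvmono : Monotone v := by
      intro j j' hjj
      rcases le_or_gt (hπtsurj j).choose (hπtsurj j').choose with hc | hc
      · exact hlamm hc
      · have hle : j' ≤ j := by
          rw [← (hπtsurj j).choose_spec, ← (hπtsurj j').choose_spec]
          exact hπtmono hc.le
        rw [le_antisymm hjj hle]
    set T : Finset ℝ := Finset.image v Finset.univ with hT
    set L : ℕ := T.card with hL
    set o := T.orderIsoOfFin rfl with ho
    have hvT : ∀ j, v j ∈ T := fun j => Finset.mem_image_of_mem v (Finset.mem_univ j)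
    set J : Fin Lt → Fin L := fun j => o.symm ⟨v j, hvT j⟩ with hJ
    have hJiff : ∀ j j', J j = J j' ↔ v j = v j' := by
      intro j j'
      constructor
      · intro h
        have h2 := congrArg o h
        rw [o.apply_symm_apply, o.apply_symm_apply] at h2
        exact congrArg Subtype.val h2
      · intro h
        simp only [hJ]
        congr 1
        exact Subtype.ext h
    have hJmono : Monotone J := fun j j' h => o.symm.monotone (Subtype.mk_le_mk.mpr (hvmono h))
    have hJsurj : Function.Surjective J := by
      intro i
      obtain ⟨j, -, hj⟩ := Finset.mem_image.mp (o i).2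
      refine ⟨j, ?_⟩
      have : (⟨v j, hvT j⟩ : T) = o i := Subtype.ext hj
      simp only [hJ, this, OrderIso.symm_apply_apply]
    set π : Fin n → Fin L := fun a => J (πt a) with hπ
    have hπmono : Monotone π := fun a b h => hJmono (hπtmono h)
    have hπsurj : Function.Surjective π := hJsurj.comp hπtsurj
    have hlamiff : ∀ a b, lam a = lam b ↔ π a = π b := by
      intro a b
      rw [hva a, hva b]
      exact (hJiff _ _).symm
    have hneq : List.ofFn (multCard π) ≠ List.ofFn (multCard πt) := by
      intro hEq
      have hLL : L = Lt := by
        have := congrArg List.length hEq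
        simpa using this
      have hJinj : Function.Injective J := by
        have hcard : Fintype.card (Fin Lt) = Fintype.card (Fin L) := by simp [hLL]
        exact ((Fintype.bijective_iff_surjective_and_card J).mpr ⟨hJsurj, hcard⟩).injective
      apply hnF
      refine ⟨htrS, lam, hlamm, ?_, P, hP, hS⟩
      intro a b
      rw [hlamiff a b]
      exact ⟨fun h => hJinj h, fun h => congrArg J h⟩
    exact ⟨L, π, hπmono, hπsurj, ⟨J, hJmono, hJsurj, fun i => multCard_comp J πt i⟩, hneq,
      htrS, lam, hlamm, hlamiff, P, hP, hS⟩
  · rintro ⟨L, π, hπm, hπs, ⟨J, hJm, hJs, hJcard⟩, hne, htrS, lam, hlamm, hlamiff, P, hP, hS⟩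
    have hnF : S ∉ Face πt := by
      rintro ⟨-, mu, hmum, hmuiff, Q, hQ, hSQ⟩
      have hlm : lam = mu := eig_unique hP hQ hlamm hmum (by rw [← hS, ← hSQ])
      have hiff : ∀ a b, π a = π b ↔ πt a = πt b := by
        intro a b
        rw [← hlamiff a b, hlm, hmuiff a b]
      exact hne (lists_eq_of_same_fibers hπm hπs hπtmono hπtsurj hiff)
    refine ⟨?_, hnF⟩
    rcases Nat.eq_zero_or_pos n with hn | hn
    · exfalso
      apply hne
      have hL0 : L = 0 := by
        by_contra h
        obtain ⟨a, -⟩ := hπs ⟨0, Nat.pos_of_ne_zero h⟩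
        exact absurd a.isLt (by omega)
      have hLt0 : Lt = 0 := by
        by_contra h
        obtain ⟨a, -⟩ := hπtsurj ⟨0, Nat.pos_of_ne_zero h⟩
        exact absurd a.isLt (by omega)
      subst hL0
      subst hLt0
      simp [List.ofFn_zero]
    · have hπeq : π = fun a => J (πt a) :=
        monotone_eq_of_multCard hπm (hJm.comp hπtmono)
          (fun i => by rw [hJcard i, ← multCard_comp])
      have hfibt : ∀ a b, πt a = πt b → lam a = lam b := by
        intro a b h
        refine (hlamiff a b).mpr ?_
        rw [hπeq]
        exact congrArg J h
      have hsum : ∑ a, lam a = 0 := by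
        rw [← trace_conj hP lam, ← hS]
        exact htrS
      exact mem_closure_face hn πt hπtmono hlamm hfibt hsum hP hS
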